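/- For every t ≥ 1, the unitary operator u_t on ℓ²(ℤ) and the bilateral shift S on ℓ²(ℤ) (Sδ_n = δ_{n−1}) satisfy ‖u_t S − S u_t‖ ≤ 2π/t. In particular ‖u_t S − S u_t‖ → 0 as t → ∞. -/

import Mathlib

open Complex Real Filter

/-! The commutator `u_t S - S u_t` maps `δ_n` to `(λ_{n-1} - λ_n) δ_{n-1}`, where
`λ_n = diagonalEntry t n` is the eigenvalue of `u_t` at `δ_n`, and an operator sending a Hilbert
basis to multiples of an orthonormal family has norm at most the supremum of the multipliers.
Since `e^{2πi} = 1`, `λ_n = exp (2πi c(n) / t)` with `c` the clamp of `ℝ` onto `[0, t]`; as `c` is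
1-Lipschitz, consecutive eigenvalues differ by at most `2π / t`. -/

section

variable {ι 𝕜 E F : Type*} [RCLike 𝕜] [NormedAddCommGroup E] [InnerProductSpace 𝕜 E]
  [NormedAddCommGroup F] [InnerProductSpace 𝕜 F]

theorem HilbertBasis.ofRepr_refl_apply [DecidableEq ι] (i : ι) :
    HilbertBasis.ofRepr (LinearIsometryEquiv.refl 𝕜 (lp (fun _ : ι => 𝕜) 2)) i = lp.single 2 i 1 :=
  (HilbertBasis.repr_symm_single _ i).symm

theorem HilbertBasis.opNorm_le_of_apply_eq_smul (b : HilbertBasis ι 𝕜 E) {v : ι → F}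
    (hv : Orthonormal 𝕜 v) {T : E →L[𝕜] F} {d : ι → 𝕜} {C : ℝ} (hC : 0 ≤ C)
    (hd : ∀ i, ‖d i‖ ≤ C) (hT : ∀ i, T (b i) = d i • v i) : ‖T‖ ≤ C := by
  refine T.opNorm_le_bound hC fun x => ?_
  have hsum : HasSum (fun i => (b.repr x i * d i) • v i) (T x) := by
    simpa only [map_smul, hT, smul_smul] using T.hasSum (b.hasSum_repr x)
  have hpartial : ∀ s : Finset ι, ‖∑ i ∈ s, (b.repr x i * d i) • v i‖ ≤ C * ‖x‖ := by
    intro s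
    refine pow_le_pow_iff_left₀ (norm_nonneg _) (by positivity) two_ne_zero |>.mp ?_
    calc ‖∑ i ∈ s, (b.repr x i * d i) • v i‖ ^ 2 = ∑ i ∈ s, ‖b.repr x i * d i‖ ^ 2 := by
          simpa using hv.orthogonalFamily.norm_sum (fun i => b.repr x i * d i) s
      _ ≤ ∑ i ∈ s, C ^ 2 * ‖inner 𝕜 (b i) x‖ ^ 2 := by
          gcongr with i
          rw [norm_mul, mul_pow, mul_comm, b.repr_apply_apply]
          gcongr
          exact hd i
      _ ≤ (C * ‖x‖) ^ 2 := by
          rw [← Finset.mul_sum, mul_pow]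
          gcongr
          exact b.orthonormal.sum_inner_products_le x
  exact le_of_tendsto' ((continuous_norm.tendsto _).comp hsum) hpartial

end

theorem norm_exp_mul_I_sub_exp_mul_I_le (x y : ℝ) :
    ‖Complex.exp (x * I) - Complex.exp (y * I)‖ ≤ |x - y| := by
  simpa [circleMap, Complex.dist_eq, Real.dist_eq] using
    (lipschitzWith_circleMap 0 1).dist_le_mul x y

noncomputable def diagonalEntry (t : ℝ) (n : ℤ) : ℂ :=
  if 0 ≤ n ∧ (n : ℝ) ≤ t then Complex.exp (2 * π * I * n / t) else 1

theorem diagonalEntry_eq_exp_projIcc {t : ℝ} (ht : 0 < t) (n : ℤ) :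
    diagonalEntry t n = Complex.exp (2 * π * I * (Set.projIcc 0 t ht.le n : ℝ) / t) := by
  unfold diagonalEntry
  split_ifs with h
  · rw [Set.projIcc_of_mem _ ⟨by exact_mod_cast h.1, h.2⟩]
    rfl
  rcases not_and_or.mp h with hn | hn
  · rw [Set.projIcc_of_le_left _ (by exact_mod_cast (not_le.mp hn).le)]
    simp
  · rw [Set.projIcc_of_right_le _ (not_le.mp hn).le, mul_div_assoc, Subtype.coe_mk,
      div_self (ofReal_ne_zero.mpr ht.ne'), mul_one, Complex.exp_two_pi_mul_I]

theorem norm_diagonalEntry_sub_le {t : ℝ} (ht : 0 < t) (m n : ℤ) :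
    ‖diagonalEntry t m - diagonalEntry t n‖ ≤ 2 * π / t * |(m : ℝ) - n| := by
  let p (k : ℤ) : ℝ := Set.projIcc 0 t ht.le k
  have hexp (k : ℤ) : diagonalEntry t k = Complex.exp ((2 * π / t * p k : ℝ) * I) := by
    rw [diagonalEntry_eq_exp_projIcc ht]
    congr 1
    simp only [p]
    push_cast
    ring
  calc ‖diagonalEntry t m - diagonalEntry t n‖ ≤ |2 * π / t * p m - 2 * π / t * p n| := by
        rw [hexp, hexp]
        exact norm_exp_mul_I_sub_exp_mul_I_le _ _
    _ = 2 * π / t * |p m - p n| := by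
        rw [← mul_sub, abs_mul, abs_of_pos (by positivity)]
    _ ≤ 2 * π / t * |(m : ℝ) - n| :=
        mul_le_mul_of_nonneg_left (Set.abs_projIcc_sub_projIcc ht.le) (by positivity)

theorem diagonal_almost_commutes_with_shift
    (U : ℝ → (lp (fun _ : ℤ => ℂ) 2 →L[ℂ] lp (fun _ : ℤ => ℂ) 2))
    (S : lp (fun _ : ℤ => ℂ) 2 →L[ℂ] lp (fun _ : ℤ => ℂ) 2)
    (hU : ∀ t : ℝ, 1 ≤ t → ∀ n : ℤ,
      U t (lp.single 2 n 1) =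
        (if 0 ≤ n ∧ (n : ℝ) ≤ t then Complex.exp (2 * Real.pi * Complex.I * n / t) else 1) •
          lp.single 2 n 1)
    (hS : ∀ n : ℤ, S (lp.single 2 n 1) = lp.single 2 (n - 1) 1) :
    (∀ t : ℝ, 1 ≤ t → ‖U t ∘L S - S ∘L U t‖ ≤ 2 * Real.pi / t) ∧
    Tendsto (fun t : ℝ => ‖U t ∘L S - S ∘L U t‖) atTop (nhds 0) := by
  have hbound : ∀ t : ℝ, 1 ≤ t → ‖U t ∘L S - S ∘L U t‖ ≤ 2 * π / t := by
    intro t ht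
    have ht0 : 0 < t := zero_lt_one.trans_le ht
    let b := HilbertBasis.ofRepr (LinearIsometryEquiv.refl ℂ (lp (fun _ : ℤ => ℂ) 2))
    have hb (n : ℤ) : b n = lp.single 2 n 1 := HilbertBasis.ofRepr_refl_apply n
    refine b.opNorm_le_of_apply_eq_smul (b.orthonormal.comp _ (sub_left_injective (b := 1)))
      (d := fun n => diagonalEntry t (n - 1) - diagonalEntry t n) (by positivity)
      (fun n => by simpa using norm_diagonalEntry_sub_le ht0 (n - 1) n) (fun n => ?_)
    rw [Function.comp_apply, hb, hb, sub_apply,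
      ContinuousLinearMap.comp_apply, ContinuousLinearMap.comp_apply, hS, hU t ht, hU t ht,
      map_smul, hS, ← sub_smul]
    rfl
  refine ⟨hbound, squeeze_zero' (Eventually.of_forall fun t => norm_nonneg _)
    ((eventually_ge_atTop 1).mono hbound) (tendsto_const_nhds.div_atTop tendsto_id)⟩
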